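/- For any partitions α and β, the composition D_α ∘ K_β equals the sum over all partitions λ of K_λ ∘ D_{s_{β/λ} ∗ s_α}. -/

import Mathlib

open scoped TensorProduct Classical

noncomputable section

/-- The single-row Young diagram with `k` boxes, whose Schur function is `h_k`
and whose power sum is `p_k`. -/
def rowDiagram (k : ℕ) : YoungDiagram :=
  YoungDiagram.ofRowLens [k] (List.pairwise_singleton _ k).sortedGE

/-- The quantity `z_λ = ∏ i^{m_i} m_i!` attached to a partition (Young diagram). -/
def zee (μ : YoungDiagram) : ℚ :=
  ((μ.rowLens.prod * (μ.rowLens.dedup.map fun i => (μ.rowLens.count i).factorial).prod : ℕ) : ℚ)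

/-- The ring of symmetric functions over `ℚ`, presented with its Schur basis `s`,
its power-sum basis `p`, the Hall inner product (for which the Schur functions are
orthonormal and `⟨p_λ, p_μ⟩ = δ_{λμ} z_λ`), the skewing operators `D f` (adjoint of
multiplication by `f`), and the Kronecker product `kron`
(determined by `p_λ ∗ p_μ = δ_{λμ} z_λ p_λ`). -/
structure SymmFn (Λ : Type*) [CommRing Λ] [Algebra ℚ Λ] where
  /-- the Schur basis -/
  s : Module.Basis YoungDiagram ℚ Λ
  /-- the power-sum basis -/
  p : Module.Basis YoungDiagram ℚ Λ
  /-- the Hall inner product -/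
  inner : Λ →ₗ[ℚ] Λ →ₗ[ℚ] ℚ
  inner_symm : ∀ f g, inner f g = inner g f
  inner_schur : ∀ μ ν, inner (s μ) (s ν) = if μ = ν then 1 else 0
  inner_power : ∀ μ ν, inner (p μ) (p ν) = if μ = ν then zee μ else 0
  power_mul : ∀ μ : YoungDiagram, p μ = (μ.rowLens.map fun k => p (rowDiagram k)).prod
  /-- the skewing operator `D f`, adjoint of multiplication by `f` -/
  D : Λ → Λ →ₗ[ℚ] Λ
  D_adjoint : ∀ f g h, inner (D f g) h = inner g (f * h)
  /-- the Kronecker (internal) product -/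
  kron : Λ →ₗ[ℚ] Λ →ₗ[ℚ] Λ
  kron_power : ∀ μ ν, kron (p μ) (p ν) = if μ = ν then zee μ • p μ else 0

namespace SymmFn

variable {Λ : Type*} [CommRing Λ] [Algebra ℚ Λ] (S : SymmFn Λ)

/-- The operator `U f` of multiplication by `f`. -/
def U (_S : SymmFn Λ) (f : Λ) : Λ →ₗ[ℚ] Λ := LinearMap.mulLeft ℚ f

/-- The skew Schur function `s_{α/θ} = D_{s_θ}(s_α)`. -/
def skew (α θ : YoungDiagram) : Λ := S.D (S.s θ) (S.s α)

/-!
Test both sides on power sums. Kronecker multiplication is diagonal there,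
`K_g p_μ = ⟨g, p_μ⟩ p_μ`, and `⟨p_μ, f p_ν⟩ = ⟨D_{p_ν} p_μ, f⟩` only sees the `p_ρ` with
`p_ν p_ρ = p_μ`. Pairing the right-hand side with `p_ν` produces `∑_λ ⟨s_λ, p_ν⟩ s_{β/λ}`, which is
`D_{p_ν} s_β` by expanding `p_ν` in the Schur basis; so both sides become
`⟨s_β, p_μ⟩ ⟨D_{p_ν} p_μ, s_α⟩`.
-/

theorem _root_.Module.Basis.bilin_apply_right_of_orthogonal {ι R M : Type*} [CommSemiring R]
    [AddCommMonoid M] [Module R M] (b : Module.Basis ι R M) (B : M →ₗ[R] M →ₗ[R] R) (c : ι → R)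
    (hB : ∀ i j, B (b i) (b j) = if i = j then c i else 0) (x : M) (j : ι) :
    B x (b j) = b.repr x j * c j := by
  have key : B.flip (b j) = c j • (Finsupp.lapply j).comp b.repr.toLinearMap :=
    b.ext fun i => by
      rw [LinearMap.flip_apply, hB, LinearMap.smul_apply, LinearMap.comp_apply]
      split_ifs with h <;> simp [h, Ne.symm]
  simpa [mul_comm] using LinearMap.congr_fun key x

lemma zee_ne_zero (μ : YoungDiagram) : zee μ ≠ 0 := by
  have h0 : 0 ∉ μ.rowLens := fun h => (μ.pos_of_mem_rowLens 0 h).false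
  simp [zee, List.prod_eq_zero_iff, h0, Nat.factorial_ne_zero]

lemma exists_p_mul_eq (μ ν : YoungDiagram) : ∃ κ, S.p μ * S.p ν = S.p κ := by
  set rows := List.insertionSort (· ≥ ·) (μ.rowLens ++ ν.rowLens)
  have hperm : rows.Perm (μ.rowLens ++ ν.rowLens) := List.perm_insertionSort _ _
  have hpos : ∀ x ∈ rows, 0 < x := by
    intro x hx
    rcases List.mem_append.mp (hperm.mem_iff.mp hx) with h | h
    exacts [μ.pos_of_mem_rowLens x h, ν.pos_of_mem_rowLens x h]
  refine ⟨YoungDiagram.ofRowLens rows (List.pairwise_insertionSort _ _).sortedGE, ?_⟩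
  rw [S.power_mul μ, S.power_mul ν, S.power_mul, YoungDiagram.rowLens_ofRowLens_eq_self hpos,
    ← List.prod_append, ← List.map_append]
  exact ((hperm.map _).prod_eq).symm

lemma inner_s_eq_repr (x : Λ) (ν : YoungDiagram) : S.inner x (S.s ν) = S.s.repr x ν := by
  simpa using S.s.bilin_apply_right_of_orthogonal S.inner 1 S.inner_schur x ν

lemma inner_p_eq_repr_mul (x : Λ) (ν : YoungDiagram) :
    S.inner x (S.p ν) = S.p.repr x ν * zee ν :=
  S.p.bilin_apply_right_of_orthogonal S.inner zee S.inner_power x ν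

lemma ext_of_inner_p {x y : Λ} (h : ∀ ν, S.inner x (S.p ν) = S.inner y (S.p ν)) : x = y :=
  S.p.ext_elem fun ν => mul_right_cancel₀ (zee_ne_zero ν) <| by
    rw [← S.inner_p_eq_repr_mul, ← S.inner_p_eq_repr_mul, h]

lemma inner_eq_sum_p (x y : Λ) :
    S.inner x y = ∑ ρ ∈ (S.p.repr x).support, S.p.repr x ρ * S.inner (S.p ρ) y := by
  conv_lhs => rw [← S.p.linearCombination_repr x]
  simp [Finsupp.linearCombination_apply, Finsupp.sum]

lemma kron_p_eq_inner_smul (f : Λ) (ν : YoungDiagram) :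
    S.kron f (S.p ν) = S.inner f (S.p ν) • S.p ν := by
  have key : S.kron.flip (S.p ν) = (S.inner.flip (S.p ν)).smulRight (S.p ν) :=
    S.p.ext fun μ => by
      simp only [LinearMap.flip_apply, LinearMap.smulRight_apply, S.kron_power, S.inner_power]
      split_ifs with h <;> simp [h]
  exact LinearMap.congr_fun key f

lemma inner_kron_p (f g : Λ) (ν : YoungDiagram) :
    S.inner (S.kron f g) (S.p ν) = S.inner f (S.p ν) * S.inner g (S.p ν) := by
  have key : (S.inner.flip (S.p ν)).comp (S.kron f) = S.inner f (S.p ν) • S.inner.flip (S.p ν) :=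
    S.p.ext fun μ => by
      simp only [LinearMap.comp_apply, LinearMap.flip_apply, LinearMap.smul_apply,
        S.kron_p_eq_inner_smul, map_smul, S.inner_power, smul_eq_mul]
      split_ifs with h <;> simp [h]
  exact LinearMap.congr_fun key g

lemma D_zero : S.D 0 = 0 :=
  LinearMap.ext fun g => S.ext_of_inner_p fun ν => by simp [S.D_adjoint]

lemma inner_D_comm (f g x : Λ) : S.inner (S.D f x) g = S.inner (S.D g x) f := by
  rw [S.D_adjoint, S.D_adjoint, mul_comm]

lemma inner_skew_p (β l ρ : YoungDiagram) :
    S.inner (S.skew β l) (S.p ρ) = S.s.repr (S.D (S.p ρ) (S.s β)) l := by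
  rw [skew, inner_D_comm, inner_s_eq_repr]

lemma sum_repr_mul_inner_skew (β : YoungDiagram) (x y : Λ) {G : Finset YoungDiagram}
    (hG : (S.s.repr x).support ⊆ G) :
    ∑ l ∈ G, S.s.repr x l * S.inner (S.skew β l) y = S.inner (S.s β) (x * y) := by
  conv_rhs => rw [← S.s.linearCombination_repr x, Finsupp.linearCombination_apply,
    Finsupp.sum_of_support_subset _ hG (fun l c => c • S.s l) fun _ _ => zero_smul ℚ _]
  simp [skew, S.D_adjoint, Finset.sum_mul, map_sum]

lemma p_mul_eq_of_repr_D_ne_zero {μ ν ρ : YoungDiagram}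
    (h : S.p.repr (S.D (S.p ν) (S.p μ)) ρ ≠ 0) : S.p ν * S.p ρ = S.p μ := by
  obtain ⟨κ, hκ⟩ := S.exists_p_mul_eq ν ρ
  have hne : S.inner (S.D (S.p ν) (S.p μ)) (S.p ρ) ≠ 0 := by
    rw [S.inner_p_eq_repr_mul]
    exact mul_ne_zero h (zee_ne_zero ρ)
  rw [S.D_adjoint, hκ, S.inner_power] at hne
  split_ifs at hne with hμ
  · rw [hκ, hμ]
  · exact absurd rfl hne

def kronSkewSupport (β : YoungDiagram) (f : Λ) : Finset YoungDiagram :=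
  (S.p.repr f).support.biUnion fun ρ => (S.s.repr (S.D (S.p ρ) (S.s β))).support

lemma kron_skew_eq_zero {β l : YoungDiagram} {f : Λ} (hl : l ∉ S.kronSkewSupport β f) :
    S.kron (S.skew β l) f = 0 := by
  refine S.ext_of_inner_p fun ρ => ?_
  rw [S.inner_kron_p, S.inner_skew_p, map_zero, LinearMap.zero_apply, S.inner_p_eq_repr_mul f]
  by_cases hρ : ρ ∈ (S.p.repr f).support
  · have : l ∉ (S.s.repr (S.D (S.p ρ) (S.s β))).support :=
      fun h => hl (Finset.mem_biUnion.mpr ⟨ρ, hρ, h⟩)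
    rw [Finsupp.notMem_support_iff.mp this, zero_mul]
  · rw [Finsupp.notMem_support_iff.mp hρ, zero_mul, mul_zero]

lemma inner_D_comp_kron_p (f g : Λ) (μ ν : YoungDiagram) :
    S.inner ((S.D f ∘ₗ S.kron g) (S.p μ)) (S.p ν) =
      S.inner g (S.p μ) * S.inner (S.D (S.p ν) (S.p μ)) f := by
  rw [LinearMap.comp_apply, kron_p_eq_inner_smul, map_smul, map_smul, LinearMap.smul_apply,
    smul_eq_mul, inner_D_comm]

lemma inner_kron_comp_D_p (f g : Λ) (μ ν : YoungDiagram) :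
    S.inner ((S.kron g ∘ₗ S.D f) (S.p μ)) (S.p ν) =
      S.inner g (S.p ν) * S.inner (S.D (S.p ν) (S.p μ)) f := by
  rw [LinearMap.comp_apply, inner_kron_p, inner_D_comm]

lemma sum_inner_s_mul_inner_kron_skew (β μ ν : YoungDiagram) (f : Λ) {G : Finset YoungDiagram}
    (hG : (S.s.repr (S.p ν)).support ⊆ G) :
    ∑ l ∈ G, S.inner (S.s l) (S.p ν) * S.inner (S.D (S.p ν) (S.p μ)) (S.kron (S.skew β l) f) =
      S.inner (S.s β) (S.p μ) * S.inner (S.D (S.p ν) (S.p μ)) f := by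
  set q := S.D (S.p ν) (S.p μ)
  calc ∑ l ∈ G, S.inner (S.s l) (S.p ν) * S.inner q (S.kron (S.skew β l) f)
      = ∑ ρ ∈ (S.p.repr q).support, ∑ l ∈ G, S.s.repr (S.p ν) l *
          (S.p.repr q ρ * (S.inner (S.skew β l) (S.p ρ) * S.inner f (S.p ρ))) := by
        rw [Finset.sum_comm]
        refine Finset.sum_congr rfl fun l _ => ?_
        rw [S.inner_symm (S.s l), inner_s_eq_repr, S.inner_eq_sum_p q, Finset.mul_sum]
        refine Finset.sum_congr rfl fun ρ _ => ?_
        rw [S.inner_symm (S.p ρ), inner_kron_p]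
    _ = ∑ ρ ∈ (S.p.repr q).support,
          S.p.repr q ρ * S.inner (S.p ρ) f * S.inner (S.s β) (S.p ν * S.p ρ) := by
        refine Finset.sum_congr rfl fun ρ _ => ?_
        rw [← S.sum_repr_mul_inner_skew β _ _ hG, Finset.mul_sum]
        refine Finset.sum_congr rfl fun l _ => ?_
        rw [S.inner_symm (S.p ρ)]
        ring
    _ = S.inner (S.s β) (S.p μ) * S.inner q f := by
        rw [S.inner_eq_sum_p q, Finset.mul_sum]
        refine Finset.sum_congr rfl fun ρ hρ => ?_
        rw [S.p_mul_eq_of_repr_D_ne_zero (Finsupp.mem_support_iff.mp hρ)]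
        ring

/-- Commutation relation `D_α ∘ K_β = ∑_λ K_λ ∘ D_{s_{β/λ} ∗ s_α}`. -/
theorem skewing_comp_kron (α β : YoungDiagram) :
    (S.D (S.s α)) ∘ₗ (S.kron (S.s β)) =
      ∑ᶠ l : YoungDiagram, (S.kron (S.s l)) ∘ₗ (S.D (S.kron (S.skew β l) (S.s α))) := by
  refine S.p.ext fun μ => S.ext_of_inner_p fun ν => ?_
  set G := S.kronSkewSupport β (S.s α) ∪ (S.s.repr (S.p ν)).support
  have hsupp : (Function.support fun l : YoungDiagram =>
      (S.kron (S.s l)) ∘ₗ (S.D (S.kron (S.skew β l) (S.s α)))) ⊆ G := by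
    refine Function.support_subset_iff'.mpr fun l hlG => ?_
    rw [S.kron_skew_eq_zero fun h => hlG (Finset.mem_union_left _ h), S.D_zero,
      LinearMap.comp_zero]
  rw [finsum_eq_sum_of_support_subset _ hsupp, LinearMap.sum_apply, map_sum, LinearMap.sum_apply,
    inner_D_comp_kron_p, ← S.sum_inner_s_mul_inner_kron_skew β μ ν _ Finset.subset_union_right]
  exact Finset.sum_congr rfl fun l _ => (S.inner_kron_comp_D_p _ _ μ ν).symm

end SymmFn
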